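/- Let B ⊆ V be internally near-matched for M with base vertex b, and let P be an augmenting path such that the edges of P lying in γ(B) form a nonempty even-length alternating path S. Then b is an endpoint of S, the edge of S incident to b is unmatched, and the edge of S at the other endpoint is matched. Moreover, if b is free then P contains exactly one edge with exactly one end in B, while if b is matched (necessarily to a vertex outside B) then P contains exactly two edges with exactly one end in B, one of which is the matched edge incident to b. -/

import Mathlib

open SimpleGraph

attribute [local instance] Classical.propDecidable

variable {V : Type*}

def IsMatchingSet (G : SimpleGraph V) (M : Finset (Sym2 V)) : Prop :=
  (∀ e ∈ M, e ∈ G.edgeSet) ∧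
    ∀ e ∈ M, ∀ f ∈ M, e ≠ f → ∀ v : V, v ∈ e → v ∉ f

def IsFree (M : Finset (Sym2 V)) (v : V) : Prop := ∀ e ∈ M, v ∉ e

def IsAlternating (M : Finset (Sym2 V)) {G : SimpleGraph V} {u v : V}
    (P : G.Walk u v) : Prop :=
  List.Chain' (fun e f => ¬(e ∈ M ↔ f ∈ M)) P.edges

def IsAugmenting (M : Finset (Sym2 V)) {G : SimpleGraph V} {f₁ f₂ : V}
    (P : G.Walk f₁ f₂) : Prop :=
  P.IsPath ∧ f₁ ≠ f₂ ∧ IsFree M f₁ ∧ IsFree M f₂ ∧ IsAlternating M P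

noncomputable def pathWeight (w : Sym2 V → ℝ) (M : Finset (Sym2 V)) {G : SimpleGraph V}
    {u v : V} (P : G.Walk u v) : ℝ :=
  ((P.edges.filter fun e => e ∉ M).map w).sum -
    ((P.edges.filter fun e => e ∈ M).map w).sum

def InternallyNearMatched (M : Finset (Sym2 V)) (B : Finset V) (b : V) : Prop :=
  b ∈ B ∧ (∀ v ∈ B, s(b, v) ∉ M) ∧
    ∀ v ∈ B, v ≠ b → ∃ u ∈ B, u ≠ v ∧ s(u, v) ∈ M

noncomputable def dualLoad (y : V → ℝ) (𝓑 : Finset (Finset V)) (z : Finset V → ℝ)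
    (u v : V) : ℝ :=
  y u + y v + ∑ B ∈ 𝓑.filter (fun B => u ∈ B ∧ v ∈ B), z B

def Dominated (w : Sym2 V → ℝ) (y : V → ℝ) (𝓑 : Finset (Finset V)) (z : Finset V → ℝ)
    (u v : V) : Prop :=
  w s(u, v) ≤ dualLoad y 𝓑 z u v

def Tight (w : Sym2 V → ℝ) (y : V → ℝ) (𝓑 : Finset (Finset V)) (z : Finset V → ℝ)
    (u v : V) : Prop :=
  w s(u, v) = dualLoad y 𝓑 z u v

/-!
Write `v₀, …, v_L` for the vertices and `eⱼ = s(vⱼ, vⱼ₊₁)` for the edges of `P`, and let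
`e_i, …, e_{i+n-1}` be its edges inside `B`. On an augmenting path the ends are free and the
matched edge at an inner vertex `vₖ` is `e_{k-1}` or `eₖ`. Hence every `vₖ ∈ B \ {b}`, being
matched inside `B`, lies on a matched segment edge, which forces `i ≤ k ≤ i + n`. As `n` is even,
`e_i` and `e_{i+n-1}` have opposite status, and the end of the segment whose segment edge is
unmatched must be `b`. So the vertices of `P` in `B` are exactly `v_i, …, v_{i+n}`, the edges of
`P` crossing the boundary of `B` are `e_{i-1}` (if `i > 0`) and `e_{i+n}` (if `i + n < L`), and an
end `v₀` or `v_L` of `P` lying in `B` is free, hence equals `b`; this settles the count.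
-/

theorem List.length_filter_eq_card_filter_range {α : Type*} (l : List α) (p : α → Bool) :
    (l.filter p).length =
      ((Finset.range l.length).filter fun j => ∃ h : j < l.length, p l[j]).card := by
  have hfin : (l.filter p).length = (Finset.univ.filter fun j : Fin l.length => p l[j]).card := by
    conv_lhs => rw [← List.map_getElem_finRange l, List.filter_map, List.length_map]
    simp [Fin.univ_def, Finset.card, Function.comp_def]
  rw [hfin]
  refine Finset.card_bij (fun j _ => j.val) ?_ (fun a _ b _ h => Fin.ext h) ?_
  · simp
  · simp only [Finset.mem_filter, Finset.mem_range, Finset.mem_univ, true_and]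
    rintro j ⟨-, hj, hp⟩
    exact ⟨⟨j, hj⟩, hp, rfl⟩

theorem Finset.card_filter_range_add_one_eq_or_eq {L i m : ℕ} (him : i < m) (hiL : i ≤ L) :
    ((Finset.range L).filter fun j => j + 1 = i ∨ j = m).card =
      (if 0 < i then 1 else 0) + (if m < L then 1 else 0) := by
  rw [Finset.filter_or, Finset.card_union_of_disjoint]
  · congr 1
    · rcases i with _ | i
      · simp
      · simp [Finset.filter_eq', show i < L by omega]
    · simp only [Finset.filter_eq', Finset.mem_range]
      split_ifs <;> simp
  · rw [Finset.disjoint_filter]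
    omega

theorem SimpleGraph.Walk.getVert_mem_getElem_edges {G : SimpleGraph V} {u v : V}
    (P : G.Walk u v) {j k : ℕ} (hj : j < P.edges.length) (hjk : j + 1 = k ∨ j = k) :
    P.getVert k ∈ P.edges[j] := by
  rw [Walk.getElem_edges]
  rcases hjk with rfl | rfl <;> simp

theorem IsMatchingSet.eq_of_mem_of_mem {G : SimpleGraph V} {M : Finset (Sym2 V)}
    (hM : IsMatchingSet G M) {e f : Sym2 V} (he : e ∈ M) (hf : f ∈ M) {v : V}
    (hve : v ∈ e) (hvf : v ∈ f) : e = f := by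
  by_contra hef
  exact hM.2 e he f hf hef v hve hvf

namespace InternallyNearMatched

variable {M : Finset (Sym2 V)} {B : Finset V} {b : V}

theorem eq_base_of_isFree (hB : InternallyNearMatched M B b) {v : V} (hv : v ∈ B)
    (hfree : IsFree M v) : v = b := by
  by_contra hvb
  obtain ⟨u, -, -, hu⟩ := hB.2.2 v hv hvb
  exact hfree _ hu (Sym2.mem_mk_right u v)

end InternallyNearMatched

namespace IsAlternating

variable {M : Finset (Sym2 V)} {G : SimpleGraph V} {u v : V} {P : G.Walk u v}

theorem getElem_succ_mem_iff (hP : IsAlternating M P) {j : ℕ} (hj : j + 1 < P.edges.length) :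
    P.edges[j + 1] ∈ M ↔ P.edges[j] ∉ M := by
  have := List.isChain_iff_getElem.mp hP j hj
  tauto

theorem getElem_mem_iff_of_le (hP : IsAlternating M P) {j k : ℕ} (hjk : j ≤ k)
    (hk : k < P.edges.length) :
    P.edges[k] ∈ M ↔ (P.edges[j] ∈ M ↔ Even (k - j)) := by
  obtain ⟨d, rfl⟩ := Nat.exists_eq_add_of_le hjk
  rw [Nat.add_sub_cancel_left]
  induction d with
  | zero => simp
  | succ d ih =>
    have hprev := ih (by omega) (by omega)
    have hstep := hP.getElem_succ_mem_iff (j := j + d) hk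
    rw [Nat.even_add_one]
    change P.edges[j + d + 1] ∈ M ↔ _
    tauto

theorem getElem_mem_iff_not_of_odd (hP : IsAlternating M P) {j k : ℕ} (hjk : j ≤ k)
    (hk : k < P.edges.length) (hodd : Odd (k - j)) :
    P.edges[k] ∈ M ↔ P.edges[j] ∉ M := by
  have := hP.getElem_mem_iff_of_le hjk hk
  rw [← Nat.not_even_iff_odd] at hodd
  tauto

theorem exists_getElem_mem (hP : IsAlternating M P) {k : ℕ} (h0 : 0 < k) (hk : k < P.length) :
    ∃ j, ∃ hj : j < P.edges.length, (j + 1 = k ∨ j = k) ∧ P.edges[j] ∈ M := by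
  obtain ⟨k, rfl⟩ : ∃ k', k = k' + 1 := ⟨k - 1, by omega⟩
  have hL := P.length_edges
  by_cases hkM : P.edges[k + 1] ∈ M
  · exact ⟨k + 1, _, Or.inr rfl, hkM⟩
  · exact ⟨k, _, Or.inl rfl, by have := hP.getElem_succ_mem_iff (by omega : k + 1 < _); tauto⟩

theorem not_isFree_getVert (hP : IsAlternating M P) {k : ℕ} (h0 : 0 < k) (hk : k < P.length) :
    ¬IsFree M (P.getVert k) := by
  obtain ⟨j, hj, hjk, hjM⟩ := hP.exists_getElem_mem h0 hk
  exact fun hfree => hfree _ hjM (P.getVert_mem_getElem_edges hj hjk)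

end IsAlternating

namespace IsAugmenting

variable {G : SimpleGraph V} {M : Finset (Sym2 V)} {f₁ f₂ : V} {P : G.Walk f₁ f₂}

theorem isPath (hP : IsAugmenting M P) : P.IsPath := hP.1

theorem isFree_start (hP : IsAugmenting M P) : IsFree M f₁ := hP.2.2.1

theorem isFree_end (hP : IsAugmenting M P) : IsFree M f₂ := hP.2.2.2.1

theorem isAlternating (hP : IsAugmenting M P) : IsAlternating M P := hP.2.2.2.2

theorem exists_getElem_edges_eq (hM : IsMatchingSet G M) (hP : IsAugmenting M P) {k : ℕ}
    (hk : k ≤ P.length) {w : V} (hw : s(w, P.getVert k) ∈ M) :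
    ∃ j, ∃ hj : j < P.edges.length, (j + 1 = k ∨ j = k) ∧ P.edges[j] = s(w, P.getVert k) := by
  have h0 : 0 < k := by
    by_contra! h
    obtain rfl : k = 0 := by omega
    exact hP.isFree_start _ hw (by simp)
  have hL : k < P.length := by
    by_contra! h
    obtain rfl : k = P.length := by omega
    exact hP.isFree_end _ hw (by simp)
  obtain ⟨j, hj, hjk, hjM⟩ := hP.isAlternating.exists_getElem_mem h0 hL
  exact ⟨j, hj, hjk, hM.eq_of_mem_of_mem hjM hw (P.getVert_mem_getElem_edges hj hjk)
    (Sym2.mem_mk_right _ _)⟩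

theorem mem_edges_of_mem (hM : IsMatchingSet G M) (hP : IsAugmenting M P) {v w : V}
    (hv : v ∈ P.support) (hvw : s(v, w) ∈ M) : s(v, w) ∈ P.edges := by
  obtain ⟨k, rfl, hk⟩ := Walk.mem_support_iff_exists_getVert.mp hv
  rw [Sym2.eq_swap] at hvw ⊢
  obtain ⟨j, hj, -, hje⟩ := hP.exists_getElem_edges_eq hM hk hvw
  exact hje ▸ List.getElem_mem hj

end IsAugmenting

def IsInsideSegment (B : Finset V) {G : SimpleGraph V} {u v : V} (P : G.Walk u v) (i n : ℕ) :
    Prop :=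
  0 < n ∧ i + n ≤ P.edges.length ∧
    ∀ (j : ℕ) (hj : j < P.edges.length), (∀ x ∈ P.edges[j]'hj, x ∈ B) ↔ i ≤ j ∧ j < i + n

namespace IsInsideSegment

variable {G : SimpleGraph V} {M : Finset (Sym2 V)} {B : Finset V} {b : V} {f₁ f₂ : V}
  {P : G.Walk f₁ f₂} {i n : ℕ}

theorem pos (hS : IsInsideSegment B P i n) : 0 < n := hS.1

theorem add_le_length (hS : IsInsideSegment B P i n) : i + n ≤ P.edges.length := hS.2.1

theorem mem_iff (hS : IsInsideSegment B P i n) (j : ℕ) (hj : j < P.edges.length) :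
    (∀ x ∈ P.edges[j], x ∈ B) ↔ i ≤ j ∧ j < i + n :=
  hS.2.2 j hj

theorem lt_length (hS : IsInsideSegment B P i n) : i < P.edges.length := by
  obtain ⟨hn, hin, -⟩ := hS
  omega

theorem add_sub_one_lt_length (hS : IsInsideSegment B P i n) : i + n - 1 < P.edges.length := by
  obtain ⟨hn, hin, -⟩ := hS
  omega

theorem getVert_mem (hS : IsInsideSegment B P i n) {k : ℕ} (hik : i ≤ k) (hkn : k ≤ i + n) :
    P.getVert k ∈ B := by
  obtain ⟨hn, hin, hedges⟩ := hS
  obtain ⟨j, hjk, hij, hjn⟩ : ∃ j, (j + 1 = k ∨ j = k) ∧ i ≤ j ∧ j < i + n := by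
    rcases hkn.lt_or_eq with h | rfl
    · exact ⟨k, Or.inr rfl, hik, h⟩
    · exact ⟨i + n - 1, Or.inl (by omega), by omega, by omega⟩
  exact (hedges j (by omega)).mpr ⟨hij, hjn⟩ _ (P.getVert_mem_getElem_edges _ hjk)

theorem exists_getElem_mem (hM : IsMatchingSet G M) (hB : InternallyNearMatched M B b)
    (hP : IsAugmenting M P) (hS : IsInsideSegment B P i n) {k : ℕ} (hk : k ≤ P.length)
    (hkB : P.getVert k ∈ B) (hkb : P.getVert k ≠ b) :
    ∃ j, ∃ hj : j < P.edges.length, (j + 1 = k ∨ j = k) ∧ i ≤ j ∧ j < i + n ∧ P.edges[j] ∈ M := by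
  obtain ⟨w, hwB, -, hw⟩ := hB.2.2 _ hkB hkb
  obtain ⟨j, hj, hjk, hje⟩ := hP.exists_getElem_edges_eq hM hk hw
  have hjB : ∀ x ∈ P.edges[j], x ∈ B := by
    rw [hje, Sym2.forall_mem_pair]
    exact ⟨hwB, hkB⟩
  obtain ⟨hij, hjn⟩ := (hS.mem_iff j hj).mp hjB
  exact ⟨j, hj, hjk, hij, hjn, hje ▸ hw⟩

theorem getElem_add_sub_one_mem_iff (hP : IsAlternating M P) (hS : IsInsideSegment B P i n)
    (hEven : Even n) :
    P.edges[i + n - 1]'hS.add_sub_one_lt_length ∈ M ↔ P.edges[i]'hS.lt_length ∉ M := by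
  obtain ⟨t, rfl⟩ := hEven
  have := hS.pos
  exact hP.getElem_mem_iff_not_of_odd (by omega) _ ⟨t - 1, by omega⟩

theorem base_eq_getVert (hM : IsMatchingSet G M) (hB : InternallyNearMatched M B b)
    (hP : IsAugmenting M P) (hS : IsInsideSegment B P i n) (hEven : Even n) :
    (P.edges[i]'hS.lt_length ∉ M ∧ b = P.getVert i) ∨
      (P.edges[i]'hS.lt_length ∈ M ∧ b = P.getVert (i + n)) := by
  have hL := P.length_edges
  have := hS.add_le_length
  by_cases hi : P.edges[i]'hS.lt_length ∈ M
  · refine Or.inr ⟨hi, ?_⟩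
    by_contra hb
    obtain ⟨j, hj, hjk, hij, hjn, hjM⟩ := hS.exists_getElem_mem hM hB hP (k := i + n)
      (by omega) (hS.getVert_mem (by omega) le_rfl) (Ne.symm hb)
    obtain rfl : j = i + n - 1 := by omega
    exact (hS.getElem_add_sub_one_mem_iff hP.isAlternating hEven).mp hjM hi
  · refine Or.inl ⟨hi, ?_⟩
    by_contra hb
    obtain ⟨j, hj, hjk, hij, hjn, hjM⟩ := hS.exists_getElem_mem hM hB hP (k := i)
      (by omega) (hS.getVert_mem le_rfl (by omega)) (Ne.symm hb)
    obtain rfl : j = i := by omega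
    exact hi hjM

theorem getVert_ne (hP : IsAugmenting M P) (hS : IsInsideSegment B P i n) :
    P.getVert i ≠ P.getVert (i + n) := by
  have := P.length_edges
  have := hS.pos
  have := hS.add_le_length
  exact hP.isPath.getVert_injOn.ne (show i ≤ P.length by omega) (show i + n ≤ P.length by omega)
    (by omega)

theorem getVert_mem_iff (hM : IsMatchingSet G M) (hB : InternallyNearMatched M B b)
    (hP : IsAugmenting M P) (hS : IsInsideSegment B P i n) (hEven : Even n) {k : ℕ}
    (hk : k ≤ P.length) :
    P.getVert k ∈ B ↔ i ≤ k ∧ k ≤ i + n := by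
  refine ⟨fun hkB => ?_, fun h => hS.getVert_mem h.1 h.2⟩
  have hL := P.length_edges
  have := hS.add_le_length
  by_cases hkb : P.getVert k = b
  · have hinj := hP.isPath.getVert_injOn
    rcases hS.base_eq_getVert hM hB hP hEven with ⟨-, hb⟩ | ⟨-, hb⟩
    · have := hinj hk (show i ≤ P.length by omega) (hkb.trans hb)
      omega
    · have := hinj hk (show i + n ≤ P.length by omega) (hkb.trans hb)
      omega
  · obtain ⟨j, -, hjk, hij, hjn, -⟩ := hS.exists_getElem_mem hM hB hP hk hkB hkb
    omega

theorem length_filter_crossing (hM : IsMatchingSet G M) (hB : InternallyNearMatched M B b)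
    (hP : IsAugmenting M P) (hS : IsInsideSegment B P i n) (hEven : Even n) :
    (P.edges.filter fun e => (∃ x ∈ e, x ∈ B) ∧ ∃ x ∈ e, x ∉ B).length =
      (if 0 < i then 1 else 0) + (if i + n < P.edges.length then 1 else 0) := by
  have hL := P.length_edges
  have := hS.pos
  have := hS.add_le_length
  rw [List.length_filter_eq_card_filter_range,
    ← Finset.card_filter_range_add_one_eq_or_eq (by omega : i < i + n) (by omega)]
  congr 1
  refine Finset.filter_congr fun j hj => ?_
  rw [Finset.mem_range] at hj
  have hj₀ := hS.getVert_mem_iff hM hB hP hEven (k := j) (by omega)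
  have hj₁ := hS.getVert_mem_iff hM hB hP hEven (k := j + 1) (by omega)
  simp only [decide_eq_true_eq, exists_prop_of_true hj, Walk.getElem_edges, Sym2.mem_iff,
    exists_eq_or_imp, exists_eq_left]
  rw [hj₀, hj₁]
  omega

theorem length_filter_crossing_of_isFree (hM : IsMatchingSet G M)
    (hB : InternallyNearMatched M B b) (hP : IsAugmenting M P) (hS : IsInsideSegment B P i n)
    (hEven : Even n) (hfree : IsFree M b) :
    (P.edges.filter fun e => (∃ x ∈ e, x ∈ B) ∧ ∃ x ∈ e, x ∉ B).length = 1 := by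
  rw [hS.length_filter_crossing hM hB hP hEven]
  have hL := P.length_edges
  have := hS.pos
  have := hS.add_le_length
  have hend : ∀ k, b = P.getVert k → k = 0 ∨ P.length ≤ k := fun k hk => by
    by_contra! h
    exact hP.isAlternating.not_isFree_getVert (by omega) h.2 (hk ▸ hfree)
  have hfirst : i = 0 → b = P.getVert i := fun h =>
    (hB.eq_base_of_isFree (hS.getVert_mem le_rfl (by omega))
      (by rw [h, P.getVert_zero]; exact hP.isFree_start)).symm
  have hlast : i + n = P.length → b = P.getVert (i + n) := fun h =>
    (hB.eq_base_of_isFree (hS.getVert_mem (by omega) le_rfl)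
      (by rw [h, P.getVert_length]; exact hP.isFree_end)).symm
  have hne := hS.getVert_ne hP
  rcases hS.base_eq_getVert hM hB hP hEven with ⟨-, hb⟩ | ⟨-, hb⟩
  · have := hend i hb
    have : i + n ≠ P.length := fun h => hne (hb.symm.trans (hlast h))
    split_ifs <;> omega
  · have := hend (i + n) hb
    have : i ≠ 0 := fun h => hne ((hfirst h).symm.trans hb)
    split_ifs <;> omega

theorem length_filter_crossing_of_mem (hM : IsMatchingSet G M)
    (hB : InternallyNearMatched M B b) (hP : IsAugmenting M P) (hS : IsInsideSegment B P i n)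
    (hEven : Even n) {b' : V} (hbb' : s(b, b') ∈ M) :
    (P.edges.filter fun e => (∃ x ∈ e, x ∈ B) ∧ ∃ x ∈ e, x ∉ B).length = 2 := by
  rw [hS.length_filter_crossing hM hB hP hEven]
  have hL := P.length_edges
  have := hS.pos
  have := hS.add_le_length
  have hfirst : i ≠ 0 := by
    rintro rfl
    have hfree : IsFree M (P.getVert 0) := by rw [P.getVert_zero]; exact hP.isFree_start
    have hb := hB.eq_base_of_isFree (hS.getVert_mem le_rfl (by omega)) hfree
    exact hfree _ hbb' (hb ▸ Sym2.mem_mk_left b b')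
  have hlast : i + n ≠ P.length := by
    intro h
    have hfree : IsFree M (P.getVert (i + n)) := by rw [h, P.getVert_length]; exact hP.isFree_end
    have hb := hB.eq_base_of_isFree (hS.getVert_mem (by omega) le_rfl) hfree
    exact hfree _ hbb' (hb ▸ Sym2.mem_mk_left b b')
  split_ifs <;> omega

end IsInsideSegment

theorem blossom_traversal_structure
    {V : Type*} (G : SimpleGraph V) (M : Finset (Sym2 V))
    (B : Finset V) (b : V)
    (hM : IsMatchingSet G M)
    (hB : InternallyNearMatched M B b)
    {f₁ f₂ : V} (P : G.Walk f₁ f₂) (hP : IsAugmenting M P)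
    (i n : ℕ) (hn : 0 < n) (hEven : Even n) (hin : i + n ≤ P.edges.length)
    (hchar : ∀ (j : ℕ) (hj : j < P.edges.length),
      (∀ x ∈ P.edges[j]'hj, x ∈ B) ↔ i ≤ j ∧ j < i + n) :
    (b = P.getVert i ∨ b = P.getVert (i + n)) ∧
      (b = P.getVert i →
        P.edges[i]'(by omega) ∉ M ∧ P.edges[i + n - 1]'(by omega) ∈ M) ∧
      (b = P.getVert (i + n) →
        P.edges[i + n - 1]'(by omega) ∉ M ∧ P.edges[i]'(by omega) ∈ M) ∧
      (IsFree M b →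
        (P.edges.filter fun e => (∃ x ∈ e, x ∈ B) ∧ ∃ x ∈ e, x ∉ B).length = 1) ∧
      (∀ b' : V, s(b, b') ∈ M →
        (P.edges.filter fun e => (∃ x ∈ e, x ∈ B) ∧ ∃ x ∈ e, x ∉ B).length = 2 ∧
          s(b, b') ∈ P.edges ∧ b' ∉ B) := by
  have hS : IsInsideSegment B P i n := ⟨hn, hin, hchar⟩
  have hbase := hS.base_eq_getVert hM hB hP hEven
  have hends := hS.getElem_add_sub_one_mem_iff hP.isAlternating hEven
  have hne := hS.getVert_ne hP
  refine ⟨hbase.imp And.right And.right, fun hb => ?_, fun hb => ?_,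
    hS.length_filter_crossing_of_isFree hM hB hP hEven,
    fun b' hbb' => ⟨hS.length_filter_crossing_of_mem hM hB hP hEven hbb', ?_,
      fun hb'B => hB.2.1 b' hb'B hbb'⟩⟩
  · rcases hbase with ⟨hi, -⟩ | ⟨-, hb'⟩
    · exact ⟨hi, hends.mpr hi⟩
    · exact absurd (hb.symm.trans hb') hne
  · rcases hbase with ⟨-, hb'⟩ | ⟨hi, -⟩
    · exact absurd (hb'.symm.trans hb) hne
    · exact ⟨fun h => hends.mp h hi, hi⟩
  · have hb : b ∈ P.support := by
      rcases hbase with ⟨-, hb⟩ | ⟨-, hb⟩ <;> exact hb ▸ P.getVert_mem_support _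
    exact hP.mem_edges_of_mem hM hb hbb'
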